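/- Fix cost values c_1, ..., c_n and entropy level H with 0 ≤ H ≤ log₂ n. Define P̂_i(μ) = 2^{−μ c_i} / ∑_j 2^{−μ c_j}. If μ ≥ 0 is chosen so that −∑_i P̂_i(μ) log₂ P̂_i(μ) = H, then among all probability distributions Q on {1,...,n} with entropy −∑_i Q_i log₂ Q_i ≥ H, the distribution P̂(μ) minimizes the average cost ∑_i Q_i c_i. -/

import Mathlib

/-!
Write `Z = ∑ⱼ 2^{-μ cⱼ}`. Since `log₂ P̂ᵢ = -μ cᵢ - log₂ Z`, the cross entropy of any distribution
`Q` relative to `P̂` is affine in its average cost: `-∑ Qᵢ log₂ P̂ᵢ = μ ∑ Qᵢ cᵢ + log₂ Z`, and for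
`Q = P̂` this is the entropy `H`. If `Q ≠ P̂` has entropy at least `H`, Gibbs' inequality (strict,
since `P̂ > 0`) gives `H ≤ -∑ Qᵢ log₂ Qᵢ < -∑ Qᵢ log₂ P̂ᵢ`, hence `μ ∑ P̂ᵢ cᵢ < μ ∑ Qᵢ cᵢ`, which
forces `μ > 0` and `∑ P̂ᵢ cᵢ < ∑ Qᵢ cᵢ`.
-/

open Real Finset InformationTheory

section Gibbs

variable {ι : Type*} [Fintype ι]

lemma mul_klFun_div_eq {p q : ℝ} (hp : 0 < p) (hq : 0 ≤ q) :
    p * klFun (q / p) = q * log q - q * log p + p - q := by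
  rcases hq.eq_or_lt with rfl | hq
  · simp [klFun_zero]
  · rw [klFun_apply, log_div hq.ne' hp.ne']
    field_simp

theorem sum_mul_logb_lt_sum_mul_logb_of_ne {b : ℝ} (hb : 1 < b) {p q : ι → ℝ}
    (hp : ∀ i, 0 < p i) (hq : ∀ i, 0 ≤ q i) (hsum : ∑ i, q i = ∑ i, p i) (hne : q ≠ p) :
    ∑ i, q i * logb b (p i) < ∑ i, q i * logb b (q i) := by
  obtain ⟨i₀, hi₀⟩ : ∃ i, q i ≠ p i := Function.ne_iff.mp hne
  have hkl : 0 < ∑ i, p i * klFun (q i / p i) := by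
    refine sum_pos' (fun i _ => mul_nonneg (hp i).le (klFun_nonneg (div_nonneg (hq i) (hp i).le)))
      ⟨i₀, mem_univ _, mul_pos (hp i₀) ((klFun_nonneg (div_nonneg (hq i₀) (hp i₀).le)).lt_of_ne ?_)⟩
    rw [ne_comm, Ne, klFun_eq_zero_iff (div_nonneg (hq i₀) (hp i₀).le), div_eq_one_iff_eq (hp i₀).ne']
    exact hi₀
  have hlog : ∑ i, q i * log (p i) < ∑ i, q i * log (q i) := by
    simp only [fun i => mul_klFun_div_eq (hp i) (hq i), sum_sub_distrib, sum_add_distrib,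
      hsum] at hkl
    linarith
  simp only [logb, mul_div_assoc', ← sum_div]
  exact div_lt_div_of_pos_right hlog (log_pos hb)

noncomputable def gibbs (b μ : ℝ) (c : ι → ℝ) (i : ι) : ℝ :=
  b ^ (-μ * c i) / ∑ j, b ^ (-μ * c j)

noncomputable def entropy (b : ℝ) (q : ι → ℝ) : ℝ :=
  -∑ i, q i * logb b (q i)

variable [Nonempty ι] {b : ℝ} (μ : ℝ) (c : ι → ℝ)

lemma sum_rpow_pos (hb : 0 < b) : 0 < ∑ j, b ^ (-μ * c j) :=
  sum_pos (fun _ _ => rpow_pos_of_pos hb _) univ_nonempty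

lemma gibbs_pos (hb : 0 < b) (i : ι) : 0 < gibbs b μ c i :=
  div_pos (rpow_pos_of_pos hb _) (sum_rpow_pos μ c hb)

lemma sum_gibbs (hb : 0 < b) : ∑ i, gibbs b μ c i = 1 := by
  simp only [gibbs, ← sum_div]
  exact div_self (sum_rpow_pos μ c hb).ne'

lemma logb_gibbs (hb : 0 < b) (hb1 : b ≠ 1) (i : ι) :
    logb b (gibbs b μ c i) = -μ * c i - logb b (∑ j, b ^ (-μ * c j)) := by
  rw [gibbs, logb_div (rpow_pos_of_pos hb _).ne' (sum_rpow_pos μ c hb).ne', logb_rpow hb hb1]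

lemma neg_sum_mul_logb_gibbs (hb : 0 < b) (hb1 : b ≠ 1) {q : ι → ℝ} (hq : ∑ i, q i = 1) :
    -∑ i, q i * logb b (gibbs b μ c i) = μ * ∑ i, q i * c i + logb b (∑ j, b ^ (-μ * c j)) := by
  have hterm : ∀ i, q i * (-μ * c i) = -(μ * (q i * c i)) := fun i => by ring
  simp only [logb_gibbs μ c hb hb1, mul_sub, sum_sub_distrib, ← sum_mul, hq, one_mul, hterm,
    sum_neg_distrib, ← mul_sum]
  ring

theorem gibbs_average_cost_le {μ : ℝ} (hb : 1 < b) (hμ : 0 ≤ μ) {q : ι → ℝ}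
    (hq : ∀ i, 0 ≤ q i) (hq1 : ∑ i, q i = 1) (hent : entropy b (gibbs b μ c) ≤ entropy b q) :
    ∑ i, gibbs b μ c i * c i ≤ ∑ i, q i * c i := by
  have hb0 : 0 < b := one_pos.trans hb
  by_cases hqP : q = gibbs b μ c
  · rw [hqP]
  have hgibbs := sum_mul_logb_lt_sum_mul_logb_of_ne hb (gibbs_pos μ c hb0) hq
    (hq1.trans (sum_gibbs μ c hb0).symm) hqP
  have hcost : μ * ∑ i, gibbs b μ c i * c i < μ * ∑ i, q i * c i := by
    have hP := neg_sum_mul_logb_gibbs μ c hb0 hb.ne' (sum_gibbs μ c hb0)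
    have hQ := neg_sum_mul_logb_gibbs μ c hb0 hb.ne' hq1
    unfold entropy at hent
    linarith
  exact (lt_of_mul_lt_mul_left hcost hμ).le

end Gibbs

theorem stmt12_general (n : ℕ) (hn : 0 < n) (c : Fin n → ℝ) (H : ℝ)
    (μ : ℝ) (hμ : 0 ≤ μ)
    (Phat : Fin n → ℝ)
    (hPhat : ∀ i, Phat i = (2 : ℝ) ^ (-μ * c i) / ∑ j, (2 : ℝ) ^ (-μ * c j))
    (hent : -∑ i, Phat i * Real.logb 2 (Phat i) = H) :
    ∀ Q : Fin n → ℝ, (∀ i, 0 ≤ Q i) → ∑ i, Q i = 1 →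
      H ≤ -∑ i, Q i * Real.logb 2 (Q i) →
      ∑ i, Phat i * c i ≤ ∑ i, Q i * c i := by
  intro Q hQ hQ1 hQH
  have : Nonempty (Fin n) := ⟨⟨0, hn⟩⟩
  obtain rfl : Phat = gibbs 2 μ c := funext hPhat
  exact gibbs_average_cost_le c one_lt_two hμ hQ hQ1 (hent.trans_le hQH)

/-- The Gibbs distribution `P̂ᵢ(μ) = 2^{-μ cᵢ} / ∑ⱼ 2^{-μ cⱼ}` with parameter `μ ≥ 0`
matched to the entropy level `H` minimizes the average cost `∑ᵢ Qᵢ cᵢ` among all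
probability distributions `Q` with entropy at least `H`. -/
theorem stmt12 (n : ℕ) (hn : 0 < n) (c : Fin n → ℝ) (H : ℝ)
    (hH0 : 0 ≤ H) (hHn : H ≤ Real.logb 2 n)
    (μ : ℝ) (hμ : 0 ≤ μ)
    (Phat : Fin n → ℝ)
    (hPhat : ∀ i, Phat i = (2 : ℝ) ^ (-μ * c i) / ∑ j, (2 : ℝ) ^ (-μ * c j))
    (hent : -∑ i, Phat i * Real.logb 2 (Phat i) = H) :
    ∀ Q : Fin n → ℝ, (∀ i, 0 ≤ Q i) → ∑ i, Q i = 1 →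
      H ≤ -∑ i, Q i * Real.logb 2 (Q i) →
      ∑ i, Phat i * c i ≤ ∑ i, Q i * c i :=
  stmt12_general n hn c H μ hμ Phat hPhat hent
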